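/- Abstract energy estimate for separated sets. Let a, b > 0 and let x ⊂ 𝕋 be a set of cardinality s with Δ(x) ≥ b and |ξ| ≥ a (torus distance to 0) for every ξ ∈ x. Then for every extended-real-valued function h on 𝕋 that is non-negative, even (h(−t) = h(t)), and non-increasing on [0,π], one has Σ_{ξ∈x} h(ξ) ≤ Σ_{j=0}^{⌊s/2⌋−1} h(a + bj) + Σ_{j=0}^{⌈s/2⌉−1} h(−a − bj). -/

import Mathlib

open scoped Real BigOperators ENNReal

noncomputable section

/-- Distance on the torus `ℝ/2πℤ` between (representatives of) two points. -/
def torusDist (u v : ℝ) : ℝ := ⨅ n : ℤ, |u - v + 2 * Real.pi * n|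

namespace EnergyAux

lemma torusDist_le (u v : ℝ) (n : ℤ) : torusDist u v ≤ |u - v + 2 * Real.pi * n| := by
  apply ciInf_le
  exact ⟨0, by rintro r ⟨m, rfl⟩; exact abs_nonneg _⟩

/-- canonical representative in `[-π, π]` -/
def rep (u : ℝ) : ℝ := u - 2 * Real.pi * round (u / (2 * Real.pi))

lemma abs_rep_le_pi (u : ℝ) : |rep u| ≤ Real.pi := by
  have hpi := Real.pi_pos
  have h1 : |u / (2 * Real.pi) - round (u / (2 * Real.pi))| ≤ 1 / 2 := abs_sub_round _
  have h2 : rep u = 2 * Real.pi * (u / (2 * Real.pi) - round (u / (2 * Real.pi))) := by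
    unfold rep; field_simp
  rw [h2, abs_mul, abs_of_pos (by positivity : (0:ℝ) < 2 * Real.pi)]
  nlinarith

lemma rep_spec (u : ℝ) : u = rep u + 2 * Real.pi * round (u / (2 * Real.pi)) := by
  unfold rep; ring

lemma torusDist_zero (u : ℝ) : torusDist u 0 = |rep u| := by
  apply le_antisymm
  · have h := torusDist_le u 0 (-(round (u / (2 * Real.pi))))
    have he : u - 0 + 2 * Real.pi * ((-(round (u / (2 * Real.pi))) : ℤ) : ℝ) = rep u := by
      unfold rep; push_cast; ring
    rwa [he] at h
  · apply le_ciInf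
    intro n
    set m : ℤ := round (u / (2 * Real.pi)) with hm
    have hu : u - 0 + 2 * Real.pi * (n : ℝ) = rep u + 2 * Real.pi * ((m + n : ℤ) : ℝ) := by
      unfold rep; push_cast; ring
    rw [hu]
    rcases eq_or_ne (m + n) 0 with h0 | h0
    · simp [h0]
    · have h1 : (1 : ℝ) ≤ |((m + n : ℤ) : ℝ)| := by
        rw [← Int.cast_abs]
        exact_mod_cast Int.one_le_abs h0
      have h2 : |rep u| ≤ Real.pi := abs_rep_le_pi u
      have h3 : |2 * Real.pi * ((m + n : ℤ) : ℝ)| = 2 * Real.pi * |((m + n : ℤ) : ℝ)| := by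
        rw [abs_mul, abs_of_pos (by positivity : (0:ℝ) < 2 * Real.pi)]
      have h4 : |2 * Real.pi * ((m + n : ℤ) : ℝ)| - |rep u| ≤
          |rep u + 2 * Real.pi * ((m + n : ℤ) : ℝ)| := by
        have h5 := abs_sub_abs_le_abs_sub (2 * Real.pi * ((m + n : ℤ) : ℝ))
          (-(rep u))
        have h6 : 2 * Real.pi * ((m + n : ℤ) : ℝ) - -(rep u)
            = rep u + 2 * Real.pi * ((m + n : ℤ) : ℝ) := by ring
        rw [h6, abs_neg] at h5
        exact h5
      have hpi := Real.pi_pos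
      nlinarith
  
lemma torusDist_zero_nonneg (u : ℝ) : 0 ≤ torusDist u 0 := by
  rw [torusDist_zero]; exact abs_nonneg _

lemma torusDist_zero_le_pi (u : ℝ) : torusDist u 0 ≤ Real.pi := by
  rw [torusDist_zero]; exact abs_rep_le_pi u

lemma abs_lt_one_of_floor_eq {u v : ℝ} (h : ⌊u⌋ = ⌊v⌋) : |u - v| < 1 := by
  have h1 := Int.floor_le u
  have h2 := Int.lt_floor_add_one u
  have h3 := Int.floor_le v
  have h4 := Int.lt_floor_add_one v
  rw [h] at h1 h2
  rw [abs_sub_lt_iff]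
  constructor <;> linarith

/-- Key counting lemma on the real line: if `s` reals all have `|y j| ≥ a` and are
pairwise `b`-separated, then after sorting by `|y ·|` the `k`-th smallest absolute
value is at least `a + b * (k / 2)`. -/
lemma sorted_lb (s : ℕ) (a b : ℝ) (ha : 0 < a) (hb : 0 < b) (y : Fin s → ℝ)
    (σ : Equiv.Perm (Fin s)) (hmo : Monotone fun i => |y (σ i)|)
    (hfar : ∀ j, a ≤ |y j|) (hsep : ∀ j k, j ≠ k → b ≤ |y j - y k|) (k : Fin s) :
    a + b * (((k : ℕ) / 2 : ℕ) : ℝ) ≤ |y (σ k)| := by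
  by_contra hcon
  push_neg at hcon
  set m : ℕ := (k : ℕ) / 2 with hm
  set D : ℝ := |y (σ k)| with hD
  have hDa : a ≤ D := hfar (σ k)
  have hmpos : 1 ≤ m := by
    by_contra hm0
    push_neg at hm0
    have : m = 0 := by omega
    rw [this] at hcon
    simp at hcon
    linarith
  have hsmall : ∀ i : Fin s, i ≤ k → |y (σ i)| ≤ D := fun i hi => hmo hi
  -- the bin map
  set φ : Fin s → ℕ := fun j =>
    if 0 ≤ y j then (⌊(y j - a) / b⌋).toNat else m + (⌊(-y j - a) / b⌋).toNat with hφ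
  -- bin bound for points within distance D
  have hbin : ∀ t : ℝ, a ≤ t → t ≤ D → (⌊(t - a) / b⌋).toNat < m := by
    intro t h1 h2
    have hnum : (t - a) / b < (m : ℝ) := by
      rw [div_lt_iff₀ hb]
      nlinarith
    have hfl : ⌊(t - a) / b⌋ < (m : ℤ) := by
      exact Int.floor_lt.mpr (by exact_mod_cast hnum)
    omega
  have hb1 : ∀ j, 0 ≤ y j → |y j| ≤ D → φ j < m := by
    intro j hs hle
    have : |y j| = y j := abs_of_nonneg hs
    have h1 : a ≤ y j := by rw [← this]; exact hfar j
    have h2 : y j ≤ D := by rw [← this]; exact hle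
    simp only [hφ, if_pos hs]
    exact hbin _ h1 h2
  have hb2 : ∀ j, ¬ 0 ≤ y j → |y j| ≤ D → m ≤ φ j ∧ φ j < 2 * m := by
    intro j hs hle
    have : |y j| = -y j := abs_of_neg (lt_of_not_ge hs)
    have h1 : a ≤ -y j := by rw [← this]; exact hfar j
    have h2 : -y j ≤ D := by rw [← this]; exact hle
    have := hbin _ h1 h2
    simp only [hφ, if_neg hs]
    omega
  -- injectivity of φ on points within distance D
  have hφinj : ∀ j₁ j₂ : Fin s, |y j₁| ≤ D → |y j₂| ≤ D → j₁ ≠ j₂ → φ j₁ ≠ φ j₂ := by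
    intro j₁ j₂ hle1 hle2 hne heq
    have hsep' := hsep j₁ j₂ hne
    by_cases s1 : 0 ≤ y j₁ <;> by_cases s2 : 0 ≤ y j₂
    · -- both nonnegative
      have e1 : |y j₁| = y j₁ := abs_of_nonneg s1
      have e2 : |y j₂| = y j₂ := abs_of_nonneg s2
      have a1 : a ≤ y j₁ := by rw [← e1]; exact hfar j₁
      have a2 : a ≤ y j₂ := by rw [← e2]; exact hfar j₂
      simp only [hφ, if_pos s1, if_pos s2] at heq
      have f1 : (0:ℤ) ≤ ⌊(y j₁ - a) / b⌋ := Int.floor_nonneg.mpr (div_nonneg (by linarith) hb.le)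
      have f2 : (0:ℤ) ≤ ⌊(y j₂ - a) / b⌋ := Int.floor_nonneg.mpr (div_nonneg (by linarith) hb.le)
      have hfeq : ⌊(y j₁ - a) / b⌋ = ⌊(y j₂ - a) / b⌋ := by omega
      have := abs_lt_one_of_floor_eq hfeq
      have hd : (y j₁ - a) / b - (y j₂ - a) / b = (y j₁ - y j₂) / b := by ring
      rw [hd, abs_div, abs_of_pos hb, div_lt_one hb] at this
      linarith
    · have := hb1 j₁ s1 hle1
      have := hb2 j₂ s2 hle2
      omega
    · have := hb2 j₁ s1 hle1
      have := hb1 j₂ s2 hle2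
      omega
    · -- both negative
      have e1 : |y j₁| = -y j₁ := abs_of_neg (lt_of_not_ge s1)
      have e2 : |y j₂| = -y j₂ := abs_of_neg (lt_of_not_ge s2)
      have a1 : a ≤ -y j₁ := by rw [← e1]; exact hfar j₁
      have a2 : a ≤ -y j₂ := by rw [← e2]; exact hfar j₂
      simp only [hφ, if_neg s1, if_neg s2] at heq
      have f1 : (0:ℤ) ≤ ⌊(-y j₁ - a) / b⌋ := Int.floor_nonneg.mpr (div_nonneg (by linarith) hb.le)
      have f2 : (0:ℤ) ≤ ⌊(-y j₂ - a) / b⌋ := Int.floor_nonneg.mpr (div_nonneg (by linarith) hb.le)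
      have hfeq : ⌊(-y j₁ - a) / b⌋ = ⌊(-y j₂ - a) / b⌋ := by omega
      have := abs_lt_one_of_floor_eq hfeq
      have hd : (-y j₁ - a) / b - (-y j₂ - a) / b = (y j₂ - y j₁) / b := by ring
      rw [hd, abs_div, abs_of_pos hb, div_lt_one hb, abs_sub_comm] at this
      linarith
  -- build an injection Fin (k+1) → Fin (2m)
  have hk2 : ∀ i : Fin ((k : ℕ) + 1), (i : ℕ) < s :=
    fun i => lt_of_le_of_lt (Nat.lt_succ_iff.mp i.2) k.2
  have hle : ∀ i : Fin ((k : ℕ) + 1), (⟨(i : ℕ), hk2 i⟩ : Fin s) ≤ k :=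
    fun i => by
      have := Nat.lt_succ_iff.mp i.2
      exact this
  have hdle : ∀ i : Fin ((k : ℕ) + 1), |y (σ ⟨(i : ℕ), hk2 i⟩)| ≤ D :=
    fun i => hsmall _ (hle i)
  have hφlt : ∀ j : Fin s, |y j| ≤ D → φ j < 2 * m := by
    intro j hj
    by_cases sj : 0 ≤ y j
    · have := hb1 j sj hj; omega
    · exact (hb2 j sj hj).2
  set F : Fin ((k : ℕ) + 1) → Fin (2 * m) :=
    fun i => ⟨φ (σ ⟨(i : ℕ), hk2 i⟩), hφlt _ (hdle i)⟩ with hF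
  have hFinj : Function.Injective F := by
    intro i₁ i₂ hEq
    by_contra hne
    have hne' : (⟨(i₁ : ℕ), hk2 i₁⟩ : Fin s) ≠ ⟨(i₂ : ℕ), hk2 i₂⟩ := by
      intro hcontra
      apply hne
      have : (i₁ : ℕ) = (i₂ : ℕ) := by
        simpa [Fin.mk.injEq] using hcontra
      exact Fin.ext this
    have hσne : σ ⟨(i₁ : ℕ), hk2 i₁⟩ ≠ σ ⟨(i₂ : ℕ), hk2 i₂⟩ :=
      fun hcc => hne' (σ.injective hcc)
    have := hφinj _ _ (hdle i₁) (hdle i₂) hσne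
    apply this
    simpa [hF, Fin.mk.injEq] using hEq
  have hcard := Fintype.card_le_of_injective F hFinj
  simp only [Fintype.card_fin] at hcard
  have : 2 * m ≤ (k : ℕ) := by omega
  omega

lemma sum_halves (f : ℕ → ℝ≥0∞) (s : ℕ) :
    ∑ k ∈ Finset.range s, f (k / 2) =
      (∑ j ∈ Finset.range (s / 2), f j) + ∑ j ∈ Finset.range ((s + 1) / 2), f j := by
  induction s with
  | zero => simp
  | succ n ih =>
    rw [Finset.sum_range_succ, ih]
    rcases Nat.even_or_odd n with ⟨c, hc⟩ | ⟨c, hc⟩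
    · rw [show n / 2 = c by omega, show (n + 1) / 2 = c by omega,
        show (n + 1 + 1) / 2 = c + 1 by omega, Finset.sum_range_succ]
      ring
    · rw [show n / 2 = c by omega, show (n + 1) / 2 = c + 1 by omega,
        show (n + 1 + 1) / 2 = c + 1 by omega]
      simp only [Finset.sum_range_succ]
      ring

end EnergyAux

/-- **Abstract energy estimate for separated sets** (Lemma `lem:energy1`).
If `x ⊂ 𝕋` has cardinality `s`, minimum separation `Δ(x) ≥ b`, and every point of `x`
is at torus distance at least `a` from `0`, then for every extended-real-valued `h` on the
torus that is non-negative, even and non-increasing away from zero,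
`Σ_{ξ∈x} h(ξ) ≤ Σ_{j=0}^{⌊s/2⌋−1} h(a+bj) + Σ_{j=0}^{⌈s/2⌉−1} h(−a−bj)`. -/
theorem energy_estimate (s : ℕ) (a b : ℝ) (ha : 0 < a) (hb : 0 < b)
    (x : Fin s → ℝ)
    (hsep : ∀ j k : Fin s, j ≠ k → b ≤ torusDist (x j) (x k))
    (hfar : ∀ j, a ≤ torusDist (x j) 0)
    (h : ℝ → ℝ≥0∞)
    (hper : ∀ t : ℝ, h (t + 2 * Real.pi) = h t)
    (heven : ∀ t : ℝ, h (-t) = h t)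
    (hmono : ∀ u v : ℝ, 0 ≤ u → u ≤ v → v ≤ Real.pi → h v ≤ h u) :
    ∑ j, h (x j) ≤
      (∑ j ∈ Finset.range (s / 2), h (a + b * j)) +
        ∑ j ∈ Finset.range ((s + 1) / 2), h (-a - b * j) := by
  classical
  -- canonical representatives
  set y : Fin s → ℝ := fun j => EnergyAux.rep (x j) with hy
  have hyd : ∀ j, torusDist (x j) 0 = |y j| := fun j => EnergyAux.torusDist_zero (x j)
  -- periodicity for all integer multiples
  have hper' : ∀ (t : ℝ) (n : ℤ), h (t + 2 * Real.pi * n) = h t := by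
    intro t n
    induction n using Int.induction_on with
    | zero => simp
    | succ i ihp =>
      have he : t + 2 * Real.pi * ((i : ℤ) + 1 : ℤ) = (t + 2 * Real.pi * (i : ℤ)) + 2 * Real.pi := by
        push_cast; ring
      rw [he, hper, ihp]
    | pred i ihn =>
      have he : (t + 2 * Real.pi * (-(i : ℤ) - 1 : ℤ)) + 2 * Real.pi
          = t + 2 * Real.pi * (-(i : ℤ) : ℤ) := by
        push_cast; ring
      calc h (t + 2 * Real.pi * (-(i : ℤ) - 1 : ℤ))
          = h ((t + 2 * Real.pi * (-(i : ℤ) - 1 : ℤ)) + 2 * Real.pi) := (hper _).symm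
        _ = h (t + 2 * Real.pi * (-(i : ℤ) : ℤ)) := by rw [he]
        _ = h t := ihn
  -- h only depends on the torus distance to 0
  have hA : ∀ u : ℝ, h u = h (torusDist u 0) := by
    intro u
    rw [EnergyAux.torusDist_zero]
    have h1 : h u = h (EnergyAux.rep u) := by
      conv_lhs => rw [EnergyAux.rep_spec u]
      exact hper' _ _
    rw [h1]
    rcases le_or_gt 0 (EnergyAux.rep u) with hs | hs
    · rw [abs_of_nonneg hs]
    · rw [abs_of_neg hs]
      exact (heven _).symm
  have hB : ∀ u v : ℝ, torusDist u 0 ≤ torusDist v 0 → h v ≤ h u := by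
    intro u v huv
    rw [hA u, hA v]
    exact hmono _ _ (EnergyAux.torusDist_zero_nonneg u) huv (EnergyAux.torusDist_zero_le_pi v)
  -- sorting permutation
  set σ : Equiv.Perm (Fin s) := Tuple.sort (fun j => |y j|) with hσ
  have hkey : ∀ k : Fin s, a + b * (((k : ℕ) / 2 : ℕ) : ℝ) ≤ |y (σ k)| := by
    intro k
    apply EnergyAux.sorted_lb s a b ha hb y σ
    · exact Tuple.monotone_sort (fun j => |y j|)
    · intro j; rw [← hyd]; exact hfar j
    · intro j k' hjk
      have h1 := hsep j k' hjk
      have h2 := EnergyAux.torusDist_le (x j) (x k')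
        (round (x k' / (2 * Real.pi)) - round (x j / (2 * Real.pi)))
      have he : x j - x k' + 2 * Real.pi *
          ((round (x k' / (2 * Real.pi)) - round (x j / (2 * Real.pi)) : ℤ) : ℝ)
          = y j - y k' := by
        simp only [hy, EnergyAux.rep]; push_cast; ring
      rw [he] at h2
      linarith
  -- termwise bound
  have hterm : ∀ k : Fin s, h (x (σ k)) ≤ h (a + b * (((k : ℕ) / 2 : ℕ) : ℝ)) := by
    intro k
    apply hB
    have h1 : torusDist (a + b * (((k : ℕ) / 2 : ℕ) : ℝ)) 0
        ≤ |a + b * (((k : ℕ) / 2 : ℕ) : ℝ) - 0 + 2 * Real.pi * ((0 : ℤ) : ℝ)| :=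
      EnergyAux.torusDist_le _ _ 0
    have h2 : |a + b * (((k : ℕ) / 2 : ℕ) : ℝ) - 0 + 2 * Real.pi * ((0 : ℤ) : ℝ)|
        = a + b * (((k : ℕ) / 2 : ℕ) : ℝ) := by
      rw [show a + b * (((k : ℕ) / 2 : ℕ) : ℝ) - 0 + 2 * Real.pi * ((0 : ℤ) : ℝ)
        = a + b * (((k : ℕ) / 2 : ℕ) : ℝ) by push_cast; ring]
      exact abs_of_pos (by positivity)
    rw [hyd]
    calc torusDist (a + b * (((k : ℕ) / 2 : ℕ) : ℝ)) 0
        ≤ a + b * (((k : ℕ) / 2 : ℕ) : ℝ) := le_of_le_of_eq h1 h2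
      _ ≤ |y (σ k)| := hkey k
  -- assemble
  have hsum1 : ∑ j, h (x j) = ∑ k : Fin s, h (x (σ k)) :=
    (Equiv.sum_comp σ (fun j => h (x j))).symm
  have hsum2 : ∑ k : Fin s, h (x (σ k)) ≤ ∑ k : Fin s, h (a + b * (((k : ℕ) / 2 : ℕ) : ℝ)) :=
    Finset.sum_le_sum (fun k _ => hterm k)
  have hsum3 : ∑ k : Fin s, h (a + b * (((k : ℕ) / 2 : ℕ) : ℝ))
      = ∑ k ∈ Finset.range s, h (a + b * ((k / 2 : ℕ) : ℝ)) :=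
    Fin.sum_univ_eq_sum_range (fun k => h (a + b * ((k / 2 : ℕ) : ℝ))) s
  have hsum4 := EnergyAux.sum_halves (fun j => h (a + b * (j : ℝ))) s
  have hsum5 : ∑ j ∈ Finset.range ((s + 1) / 2), h (a + b * (j : ℝ))
      = ∑ j ∈ Finset.range ((s + 1) / 2), h (-a - b * (j : ℝ)) := by
    apply Finset.sum_congr rfl
    intro j _
    rw [show -a - b * (j : ℝ) = -(a + b * (j : ℝ)) by ring, heven]
  calc ∑ j, h (x j) = ∑ k : Fin s, h (x (σ k)) := hsum1
    _ ≤ ∑ k : Fin s, h (a + b * (((k : ℕ) / 2 : ℕ) : ℝ)) := hsum2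
    _ = ∑ k ∈ Finset.range s, h (a + b * ((k / 2 : ℕ) : ℝ)) := hsum3
    _ = (∑ j ∈ Finset.range (s / 2), h (a + b * (j : ℝ)))
        + ∑ j ∈ Finset.range ((s + 1) / 2), h (a + b * (j : ℝ)) := hsum4
    _ = (∑ j ∈ Finset.range (s / 2), h (a + b * (j : ℝ)))
        + ∑ j ∈ Finset.range ((s + 1) / 2), h (-a - b * (j : ℝ)) := by rw [hsum5]

end
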